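/- arXiv:2006.07529 — 2 statements merged into one kernel-verified Lean document; each statement's English description precedes it below -/
import Mathlib

section
/- Consider the self-supervised classifier f_ss(X) = sign(−Z + b) with Z = k₁‖X‖₂² + k₂, under the model X|Y=+1 ∼ N(0,σ₁²I_d), X|Y=−1 ∼ N(0,βσ₁²I_d), β > 3, with intercept b = (1/2)[(1/N₊)∑_{Y_i=+1}Z_i + (1/N₋)∑_{Y_i=−1}Z_i] from N₊ positive and N₋ negative training samples. Then for any δ ∈ (0, (β−1)/(β+1)), with probability at least 1 − 2exp(−N₋dδ²/8) − 2exp(−N₊dδ²/8) over the training data: err_{f_ss} ≤ p₊·exp(−d(β−1−(1+β)δ)²/32) + p₋·exp(−d(β−1−(1+β)δ)²/(32β²)) if δ ∈ [(β−3)/(β+1), (β−1)/(β+1)); and err_{f_ss} ≤ p₊·exp(−d(β−1−(1+β)δ)/16) + p₋·exp(−d(β−1−(1+β)δ)²/(32β²)) if δ ∈ (0, (β−3)/(β+1)). -/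
open MeasureTheory ProbabilityTheory Real

/-- The chi-squared distribution with `d` degrees of freedom, realized as the law of the
sum of `d` squared i.i.d. standard normals. -/
noncomputable def chiSq (d : ℕ) : Measure ℝ :=
  Measure.map (fun w : Fin d → ℝ => ∑ i, (w i) ^ 2)
    (Measure.pi fun _ : Fin d => gaussianReal 0 1)

/-- Error probability of the self-supervised classifier `f_ss(X) = sign(-Z + b)` where the
self-supervised feature satisfies `(Z - k₂)/(k₁σ₁²) ~ χ²_d` given `Y = +1` and
`(Z - k₂)/(k₁βσ₁²) ~ χ²_d` given `Y = -1`, with class priors `pPos` and `1 - pPos`: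
the classifier errs on the positive class when `Z ≥ b` and on the negative class when
`Z < b`. -/
noncomputable def errSS (d : ℕ) (k₁ k₂ σ₁ β pPos b : ℝ) : ℝ :=
  pPos * ((chiSq d) {x | k₁ * σ₁ ^ 2 * x + k₂ ≥ b}).toReal
    + (1 - pPos) * ((chiSq d) {x | k₁ * β * σ₁ ^ 2 * x + k₂ < b}).toReal

/-!
The χ²_d law has moment generating function `(1 - 2t)^(-d/2)` for `t < 1/2`, and a sum of `N`
independent such variables has that of χ²_{Nd}. For a variable with the moment generating
function of χ²_n, Chernoff's bound with `t = ±ε/4` bounds both tails at relative distance `ε ≤ 1`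
by `exp (-n ε² / 8)`, and `t = 1/4` bounds the upper tail by `exp (-n ε / 8)` when `ε ≥ 1`.
Applied to the two class means of the training features, this puts the intercept `b` within
relative distance `δ` of `k₂ + k₁σ₁²d(1+β)/2` outside an event of probability at most
`2 exp (-N₋dδ²/8) + 2 exp (-N₊dδ²/8)`. For such `b`, a positive point is misclassified only if its
χ²_d variable exceeds `d(1+ε)` with `ε = (β - 1 - (1+β)δ)/2`, and a negative one only if it falls
below `d(1-ε/β)`; `ε ≤ 1` exactly when `δ ≥ (β-3)/(β+1)`, which separates the two regimes.
-/

lemma log_le_sub_inv_div_two {x : ℝ} (hx : 1 ≤ x) : log x ≤ (x - x⁻¹) / 2 := by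
  rw [← sinh_log (by linarith)]
  exact self_le_sinh_iff.2 (log_nonneg hx)

lemma neg_log_one_sub_le {u : ℝ} (hu₀ : 0 ≤ u) (hu : u ≤ 1 / 2) : -log (1 - u) ≤ u + u ^ 2 := by
  have h := log_le_sub_inv_div_two (one_le_inv₀ (by linarith) |>.2 (by linarith : 1 - u ≤ 1))
  rw [log_inv, inv_inv] at h
  have hinv : (1 - u)⁻¹ ≤ 1 + u + 2 * u ^ 2 := by
    rw [inv_le_iff_one_le_mul₀ (by linarith)]
    nlinarith
  linarith

lemma sub_sq_le_log_one_add {u : ℝ} (hu : 0 ≤ u) : u - u ^ 2 ≤ log (1 + u) := by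
  have hinv : (1 + u)⁻¹ ≤ 1 - u + u ^ 2 := by
    rw [inv_le_iff_one_le_mul₀ (by linarith)]
    nlinarith
  linarith [one_sub_inv_le_log_of_pos (by linarith : 0 < 1 + u)]

lemma integral_exp_mul_sq_gaussianReal {s : ℝ} (hs : s < 1 / 2) :
    ∫ x, exp (s * x ^ 2) ∂gaussianReal 0 1 = (1 - 2 * s) ^ (-(1 / 2 : ℝ)) := by
  have hpdf (x : ℝ) : gaussianPDFReal 0 1 x • exp (s * x ^ 2)
      = (√(2 * π))⁻¹ * exp (-(1 / 2 - s) * x ^ 2) := by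
    simp only [gaussianPDFReal, NNReal.coe_one, mul_one, sub_zero, smul_eq_mul]
    rw [mul_assoc, ← exp_add]
    ring_nf
  have hconst : (2 * π)⁻¹ * (π / (1 / 2 - s)) = (1 - 2 * s)⁻¹ := by
    have : 1 / 2 - s ≠ 0 := by linarith
    field_simp
  rw [integral_gaussianReal_eq_integral_smul one_ne_zero]
  simp only [hpdf, integral_const_mul, integral_gaussian]
  rw [← sqrt_inv, ← sqrt_mul (by positivity), hconst, sqrt_eq_rpow, inv_rpow (by linarith),
    ← rpow_neg (by linarith)]

def HasChiSqMGF {Ω : Type*} [MeasurableSpace Ω] (X : Ω → ℝ) (μ : Measure Ω) (n : ℝ) : Prop :=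
  ∀ t < 1 / 2, mgf X μ t = (1 - 2 * t) ^ (-(n / 2))

lemma measurable_sum_sq (d : ℕ) : Measurable fun w : Fin d → ℝ => ∑ i, w i ^ 2 := by
  fun_prop

instance isProbabilityMeasure_chiSq (d : ℕ) : IsProbabilityMeasure (chiSq d) :=
  Measure.isProbabilityMeasure_map (measurable_sum_sq d).aemeasurable

lemma hasChiSqMGF_chiSq (d : ℕ) : HasChiSqMGF id (chiSq d) d := by
  intro t ht
  rw [mgf, chiSq, integral_map (measurable_sum_sq d).aemeasurable (by fun_prop)]
  simp only [id, Finset.mul_sum, exp_sum]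
  rw [integral_fintype_prod_eq_pow (fun x => exp (t * x ^ 2)),
    integral_exp_mul_sq_gaussianReal ht, Fintype.card_fin, ← rpow_natCast,
    ← rpow_mul (by linarith)]
  ring_nf

section ChiSqMGF

variable {Ω : Type*} [MeasurableSpace Ω] {μ : Measure Ω} {X : Ω → ℝ} {n : ℝ}

lemma aemeasurable_of_map_eq_chiSq {d : ℕ} (h : μ.map X = chiSq d) : AEMeasurable X μ :=
  .of_map_ne_zero (h ▸ IsProbabilityMeasure.ne_zero _)

lemma hasChiSqMGF_of_map_eq_chiSq {d : ℕ} (h : μ.map X = chiSq d) : HasChiSqMGF X μ d := by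
  intro t ht
  rw [← mgf_id_map (aemeasurable_of_map_eq_chiSq h), h, hasChiSqMGF_chiSq d t ht]

lemma ProbabilityTheory.iIndepFun.hasChiSqMGF_sum {ι : Type*} {Y : ι → Ω → ℝ}
    (hind : iIndepFun Y μ) (hmeas : ∀ i, AEMeasurable (Y i) μ) (h : ∀ i, HasChiSqMGF (Y i) μ n)
    (s : Finset ι) :
    HasChiSqMGF (∑ i ∈ s, Y i) μ (s.card * n) := by
  intro t ht
  rw [hind.mgf_sum₀ hmeas, Finset.prod_congr rfl fun i _ => h i t ht, Finset.prod_const,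
    ← rpow_natCast, ← rpow_mul (by linarith)]
  ring_nf

lemma HasChiSqMGF.integrable_exp_mul [NeZero μ] (h : HasChiSqMGF X μ n) {t : ℝ}
    (ht : t < 1 / 2) :
    Integrable (fun ω => exp (t * X ω)) μ := by
  rw [← mgf_pos_iff, h t ht]
  exact rpow_pos_of_pos (by linarith) _

lemma HasChiSqMGF.measureReal_ge_le [IsProbabilityMeasure μ] (h : HasChiSqMGF X μ n) {t : ℝ}
    (ht₀ : 0 ≤ t) (ht : t < 1 / 2) (c : ℝ) :
    μ.real {ω | c ≤ X ω} ≤ exp (-(t * c) - n / 2 * log (1 - 2 * t)) := by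
  refine (measure_ge_le_exp_mul_mgf c ht₀ (h.integrable_exp_mul ht)).trans_eq ?_
  rw [h t ht, rpow_def_of_pos (by linarith), ← exp_add]
  ring_nf

lemma HasChiSqMGF.measureReal_le_le [IsProbabilityMeasure μ] (h : HasChiSqMGF X μ n) {t : ℝ}
    (ht : t ≤ 0) (c : ℝ) :
    μ.real {ω | X ω ≤ c} ≤ exp (-(t * c) - n / 2 * log (1 - 2 * t)) := by
  have ht' : t < 1 / 2 := by linarith
  refine (measure_le_le_exp_mul_mgf c ht (h.integrable_exp_mul ht')).trans_eq ?_
  rw [h t ht', rpow_def_of_pos (by linarith), ← exp_add]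
  ring_nf

lemma HasChiSqMGF.measureReal_ge_le_exp_sq [IsProbabilityMeasure μ] (h : HasChiSqMGF X μ n)
    (hn : 0 ≤ n) {ε : ℝ} (hε : 0 ≤ ε) (hε₁ : ε ≤ 1) :
    μ.real {ω | n * (1 + ε) ≤ X ω} ≤ exp (-n * ε ^ 2 / 8) := by
  refine (h.measureReal_ge_le (t := ε / 4) (by linarith) (by linarith) _).trans ?_
  have hlog := mul_le_mul_of_nonneg_left
    (neg_log_one_sub_le (u := ε / 2) (by linarith) (by linarith)) hn
  gcongr
  ring_nf at hlog ⊢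
  linarith

lemma HasChiSqMGF.measureReal_ge_le_exp [IsProbabilityMeasure μ] (h : HasChiSqMGF X μ n)
    (hn : 0 ≤ n) {ε : ℝ} (hε : 1 ≤ ε) :
    μ.real {ω | n * (1 + ε) ≤ X ω} ≤ exp (-n * ε / 8) := by
  refine (h.measureReal_ge_le (t := 1 / 4) (by norm_num) (by norm_num) _).trans ?_
  have hlog : log (1 - 2 * (1 / 4)) = -log 2 := by
    rw [show (1 : ℝ) - 2 * (1 / 4) = 2⁻¹ by norm_num, log_inv]
  have hlog₂ : log 2 ≤ 3 / 4 := log_two_lt_d9.le.trans (by norm_num)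
  have hnlog₂ := mul_le_mul_of_nonneg_left hlog₂ hn
  have hnε := mul_le_mul_of_nonneg_left hε hn
  gcongr
  rw [hlog]
  linarith

lemma HasChiSqMGF.measureReal_le_le_exp_sq [IsProbabilityMeasure μ] (h : HasChiSqMGF X μ n)
    (hn : 0 ≤ n) {ε : ℝ} (hε : 0 ≤ ε) :
    μ.real {ω | X ω ≤ n * (1 - ε)} ≤ exp (-n * ε ^ 2 / 8) := by
  refine (h.measureReal_le_le (t := -(ε / 4)) (by linarith) _).trans ?_
  have hlog := mul_le_mul_of_nonneg_left (sub_sq_le_log_one_add (u := ε / 2) (by linarith)) hn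
  gcongr
  ring_nf at hlog ⊢
  linarith

lemma HasChiSqMGF.measureReal_le_abs_sub_le [IsProbabilityMeasure μ] (h : HasChiSqMGF X μ n)
    (hn : 0 ≤ n) {ε : ℝ} (hε : 0 ≤ ε) (hε₁ : ε ≤ 1) :
    μ.real {ω | n * ε ≤ |X ω - n|} ≤ 2 * exp (-n * ε ^ 2 / 8) := by
  have hsub : {ω | n * ε ≤ |X ω - n|}
      ⊆ {ω | n * (1 + ε) ≤ X ω} ∪ {ω | X ω ≤ n * (1 - ε)} := by
    intro ω (hω : n * ε ≤ |X ω - n|)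
    rcases le_abs'.1 hω with h' | h'
    · exact Or.inr (show X ω ≤ n * (1 - ε) by linarith)
    · exact Or.inl (show n * (1 + ε) ≤ X ω by linarith)
  calc μ.real {ω | n * ε ≤ |X ω - n|}
      ≤ μ.real {ω | n * (1 + ε) ≤ X ω} + μ.real {ω | X ω ≤ n * (1 - ε)} :=
        (measureReal_mono hsub).trans (measureReal_union_le _ _)
    _ ≤ 2 * exp (-n * ε ^ 2 / 8) := by
        linarith [h.measureReal_ge_le_exp_sq hn hε hε₁, h.measureReal_le_le_exp_sq hn hε]

end ChiSqMGF

lemma measureReal_le_abs_mean_sub_le {Ω : Type*} [MeasurableSpace Ω] {μ : Measure Ω}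
    [IsProbabilityMeasure μ] {N d : ℕ} (hN : 0 < N) {a k ε : ℝ} (ha : 0 < a)
    {Z : Fin N → Ω → ℝ} (hind : iIndepFun Z μ)
    (hlaw : ∀ i, μ.map (fun ω => (Z i ω - k) / a) = chiSq d) (hε : 0 ≤ ε) (hε₁ : ε ≤ 1) :
    μ.real {ω | a * d * ε ≤ |(∑ i, Z i ω) / N - (k + a * d)|}
      ≤ 2 * exp (-N * d * ε ^ 2 / 8) := by
  set Y : Fin N → Ω → ℝ := fun i ω => (Z i ω - k) / a
  have hY : HasChiSqMGF (∑ i, Y i) μ (N * d) := by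
    have hindY : iIndepFun Y μ := hind.comp (fun _ z => (z - k) / a) fun _ => by fun_prop
    simpa using hindY.hasChiSqMGF_sum (fun i => aemeasurable_of_map_eq_chiSq (hlaw i))
      (fun i => hasChiSqMGF_of_map_eq_chiSq (hlaw i)) Finset.univ
  have hN' : (0 : ℝ) < N := Nat.cast_pos.2 hN
  have hset : {ω | a * d * ε ≤ |(∑ i, Z i ω) / N - (k + a * d)|}
      = {ω | N * d * ε ≤ |(∑ i, Y i) ω - N * d|} := by
    ext ω
    have hmean : (∑ i, Z i ω) / N - (k + a * d) = a / N * ((∑ i, Y i) ω - N * d) := by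
      simp only [Y, Finset.sum_apply, ← Finset.sum_div, Finset.sum_sub_distrib,
        Finset.sum_const, Finset.card_univ, Fintype.card_fin, nsmul_eq_mul]
      field_simp
      ring
    rw [Set.mem_ofPred_eq, Set.mem_ofPred_eq, hmean, abs_mul, abs_of_pos (by positivity),
      show a * d * ε = a / N * (N * d * ε) by field_simp,
      mul_le_mul_iff_of_pos_left (by positivity)]
  rw [hset]
  exact (hY.measureReal_le_abs_sub_le (by positivity) hε hε₁).trans_eq (by ring_nf)

lemma errSS_le_tails (d : ℕ) {k₁ k₂ σ₁ β pPos b ε : ℝ} (hk₁ : 0 < k₁) (hσ : σ₁ ≠ 0)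
    (hβ : 0 < β) (hpPos : 0 ≤ pPos) (hpNeg : 0 ≤ 1 - pPos)
    (hb₁ : k₂ + k₁ * σ₁ ^ 2 * d * (1 + ε) ≤ b) (hb₂ : b ≤ k₂ + k₁ * σ₁ ^ 2 * d * (β - ε)) :
    errSS d k₁ k₂ σ₁ β pPos b
      ≤ pPos * (chiSq d).real {x | d * (1 + ε) ≤ x}
        + (1 - pPos) * (chiSq d).real {x | x ≤ d * (1 - ε / β)} := by
  have ha : 0 < k₁ * σ₁ ^ 2 := by positivity
  refine add_le_add (mul_le_mul_of_nonneg_left (measureReal_mono fun x hx => ?_) hpPos)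
    (mul_le_mul_of_nonneg_left (measureReal_mono fun x hx => ?_) hpNeg)
  · replace hx : k₁ * σ₁ ^ 2 * x + k₂ ≥ b := hx
    show (d : ℝ) * (1 + ε) ≤ x
    exact le_of_mul_le_mul_left (by linarith) ha
  · replace hx : k₁ * β * σ₁ ^ 2 * x + k₂ < b := hx
    show x ≤ d * (1 - ε / β)
    have hscale : k₁ * σ₁ ^ 2 * β * (d * (1 - ε / β)) = k₁ * σ₁ ^ 2 * d * (β - ε) := by
      field_simp
    exact le_of_mul_le_mul_left (by linarith) (by positivity : 0 < k₁ * σ₁ ^ 2 * β)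

lemma errSS_le_of_abs_sub_le (d : ℕ) {k₁ k₂ σ₁ β pPos b δ : ℝ} (hk₁ : 0 < k₁) (hσ : σ₁ ≠ 0)
    (hβ : 0 < β) (hpPos : 0 ≤ pPos) (hpNeg : 0 ≤ 1 - pPos) (hδ : δ < (β - 1) / (β + 1))
    (hb : |b - (k₂ + k₁ * σ₁ ^ 2 * d * (1 + β) / 2)| ≤ k₁ * σ₁ ^ 2 * d * (1 + β) * δ / 2) :
    errSS d k₁ k₂ σ₁ β pPos b
      ≤ (if (β - 3) / (β + 1) ≤ δ then
           pPos * exp (-d * (β - 1 - (1 + β) * δ) ^ 2 / 32)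
             + (1 - pPos) * exp (-d * (β - 1 - (1 + β) * δ) ^ 2 / (32 * β ^ 2))
         else
           pPos * exp (-d * (β - 1 - (1 + β) * δ) / 16)
             + (1 - pPos) * exp (-d * (β - 1 - (1 + β) * δ) ^ 2 / (32 * β ^ 2))) := by
  have hβ₁ : (0 : ℝ) < β + 1 := by linarith
  have hgap : 0 < β - 1 - (1 + β) * δ := by linarith [(lt_div_iff₀ hβ₁).1 hδ]
  obtain ⟨hb₁, hb₂⟩ := abs_sub_le_iff.1 hb
  have hχ := hasChiSqMGF_chiSq d
  have htails := errSS_le_tails d (k₂ := k₂) (b := b) (ε := (β - 1 - (1 + β) * δ) / 2)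
    hk₁ hσ hβ hpPos hpNeg (by linarith) (by linarith)
  have hneg := hχ.measureReal_le_le_exp_sq (ε := (β - 1 - (1 + β) * δ) / 2 / β)
    (Nat.cast_nonneg d) (by positivity)
  have herr (A : ℝ) (hA : (chiSq d).real {x | d * (1 + (β - 1 - (1 + β) * δ) / 2) ≤ x} ≤ A) :
      errSS d k₁ k₂ σ₁ β pPos b
        ≤ pPos * A + (1 - pPos) * exp (-d * (β - 1 - (1 + β) * δ) ^ 2 / (32 * β ^ 2)) := by
    refine htails.trans (add_le_add (mul_le_mul_of_nonneg_left hA hpPos)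
      (mul_le_mul_of_nonneg_left (hneg.trans_eq ?_) hpNeg))
    congr 1
    field_simp
    ring
  split_ifs with hδ₃
  · refine herr _ ((hχ.measureReal_ge_le_exp_sq (Nat.cast_nonneg d) (by positivity)
      ?_).trans_eq ?_)
    · linarith [(div_le_iff₀ hβ₁).1 hδ₃]
    · congr 1; ring
  · refine herr _ ((hχ.measureReal_ge_le_exp (Nat.cast_nonneg d) ?_).trans_eq ?_)
    · linarith [(lt_div_iff₀ hβ₁).1 (not_le.1 hδ₃)]
    · congr 1; ring

lemma one_sub_sub_le_measureReal_of_compl_subset_union {Ω : Type*} [MeasurableSpace Ω]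
    {μ : Measure Ω} [IsProbabilityMeasure μ] {s t₁ t₂ : Set Ω} {a₁ a₂ : ℝ}
    (h₁ : μ.real t₁ ≤ a₁) (h₂ : μ.real t₂ ≤ a₂) (h : sᶜ ⊆ t₁ ∪ t₂) :
    1 - a₁ - a₂ ≤ μ.real s := by
  have hcover : 1 ≤ μ.real s + μ.real sᶜ := probReal_univ (μ := μ) ▸
    (measureReal_mono (Set.union_compl_self s).ge).trans (measureReal_union_le s sᶜ)
  linarith [(measureReal_mono h).trans (measureReal_union_le (μ := μ) t₁ t₂)]

theorem self_supervised_classifier_error_bound_general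
    {Ω : Type*} [MeasureSpace Ω] [IsProbabilityMeasure (ℙ : Measure Ω)]
    (d : ℕ) (k₁ k₂ σ₁ β pPos : ℝ)
    (hk₁ : 0 < k₁) (hσ : 0 < σ₁) (hβ : 3 < β)
    (hpPos : 0 ≤ pPos) (hpNeg : 1 / 2 ≤ 1 - pPos)
    (Np Nm : ℕ) (hNp : 1 ≤ Np) (hNm : 1 ≤ Nm)
    (Zp : Fin Np → Ω → ℝ) (Zm : Fin Nm → Ω → ℝ)
    (hZp : ∀ i, Measure.map (fun ω => (Zp i ω - k₂) / (k₁ * σ₁ ^ 2)) ℙ = chiSq d)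
    (hZm : ∀ i, Measure.map (fun ω => (Zm i ω - k₂) / (k₁ * β * σ₁ ^ 2)) ℙ = chiSq d)
    (hindep : iIndepFun
      (Sum.elim Zp Zm : Fin Np ⊕ Fin Nm → Ω → ℝ) ℙ)
    (δ : ℝ) (hδ : 0 < δ) (hδ' : δ < (β - 1) / (β + 1)) :
    (ℙ {ω | errSS d k₁ k₂ σ₁ β pPos
              ((1 / 2) * ((∑ i, Zp i ω) / Np + (∑ j, Zm j ω) / Nm))
          ≤ (if (β - 3) / (β + 1) ≤ δ then
               pPos * Real.exp (-d * (β - 1 - (1 + β) * δ) ^ 2 / 32)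
                 + (1 - pPos) * Real.exp (-d * (β - 1 - (1 + β) * δ) ^ 2 / (32 * β ^ 2))
             else
               pPos * Real.exp (-d * (β - 1 - (1 + β) * δ) / 16)
                 + (1 - pPos) * Real.exp (-d * (β - 1 - (1 + β) * δ) ^ 2 / (32 * β ^ 2)))}).toReal
      ≥ 1 - 2 * Real.exp (-Nm * d * δ ^ 2 / 8) - 2 * Real.exp (-Np * d * δ ^ 2 / 8) := by
  have hβ₀ : 0 < β := by linarith
  have hδ₁ : δ ≤ 1 := hδ'.le.trans ((div_le_one (by linarith)).2 (by linarith))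
  have hindp : iIndepFun Zp ℙ := (hindep.precomp Sum.inl_injective :)
  have hindm : iIndepFun Zm ℙ := (hindep.precomp Sum.inr_injective :)
  have hp := measureReal_le_abs_mean_sub_le hNp (by positivity) hindp hZp hδ.le hδ₁
  have hm := measureReal_le_abs_mean_sub_le hNm (by positivity) hindm hZm hδ.le hδ₁
  refine ge_iff_le.2 (one_sub_sub_le_measureReal_of_compl_subset_union hm hp fun ω hω => ?_)
  by_contra hgood
  simp only [Set.mem_union, Set.mem_ofPred_eq, not_or, not_le] at hgood
  obtain ⟨hm₁, hm₂⟩ := abs_sub_lt_iff.1 hgood.1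
  obtain ⟨hp₁, hp₂⟩ := abs_sub_lt_iff.1 hgood.2
  refine hω (errSS_le_of_abs_sub_le d hk₁ hσ.ne' hβ₀ hpPos (by linarith) hδ' ?_)
  exact abs_sub_le_iff.2 ⟨by linarith, by linarith⟩

theorem self_supervised_classifier_error_bound
    {Ω : Type*} [MeasureSpace Ω] [IsProbabilityMeasure (ℙ : Measure Ω)]
    (d : ℕ) (hd : 1 ≤ d) (k₁ k₂ σ₁ β pPos : ℝ)
    (hk₁ : 0 < k₁) (hk₂ : 0 < k₂) (hσ : 0 < σ₁) (hβ : 3 < β)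
    (hpPos : 0 ≤ pPos) (hpNeg : 1 / 2 ≤ 1 - pPos)
    (Np Nm : ℕ) (hNp : 1 ≤ Np) (hNm : 1 ≤ Nm)
    (Zp : Fin Np → Ω → ℝ) (Zm : Fin Nm → Ω → ℝ)
    (hZp : ∀ i, Measure.map (fun ω => (Zp i ω - k₂) / (k₁ * σ₁ ^ 2)) ℙ = chiSq d)
    (hZm : ∀ i, Measure.map (fun ω => (Zm i ω - k₂) / (k₁ * β * σ₁ ^ 2)) ℙ = chiSq d)
    (hindep : iIndepFun
      (Sum.elim Zp Zm : Fin Np ⊕ Fin Nm → Ω → ℝ) ℙ)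
    (δ : ℝ) (hδ : 0 < δ) (hδ' : δ < (β - 1) / (β + 1)) :
    (ℙ {ω | errSS d k₁ k₂ σ₁ β pPos
              ((1 / 2) * ((∑ i, Zp i ω) / Np + (∑ j, Zm j ω) / Nm))
          ≤ (if (β - 3) / (β + 1) ≤ δ then
               pPos * Real.exp (-d * (β - 1 - (1 + β) * δ) ^ 2 / 32)
                 + (1 - pPos) * Real.exp (-d * (β - 1 - (1 + β) * δ) ^ 2 / (32 * β ^ 2))
             else
               pPos * Real.exp (-d * (β - 1 - (1 + β) * δ) / 16)
                 + (1 - pPos) * Real.exp (-d * (β - 1 - (1 + β) * δ) ^ 2 / (32 * β ^ 2)))}).toReal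
      ≥ 1 - 2 * Real.exp (-Nm * d * δ ^ 2 / 8) - 2 * Real.exp (-Np * d * δ ^ 2 / 8) :=
  self_supervised_classifier_error_bound_general d k₁ k₂ σ₁ β pPos hk₁ hσ hβ hpPos hpNeg Np Nm hNp
    hNm Zp Zm hZp hZm hindep δ hδ hδ'
end

section
/- Under the high-dimensional model X|Y=+1 ∼ N(0,σ₁²I_d), X|Y=−1 ∼ N(0,βσ₁²I_d) with β > 3 and p₋ ≥ 1/2: for any fixed δ ∈ (0,(β−1)/(β+1)) there exists d₀ such that for all d ≥ d₀, the self-supervised error bound p₊·exp(−d(β−1−(1+β)δ)²/32) + p₋·exp(−d(β−1−(1+β)δ)²/(32β²)) is strictly less than 1/4, which is a lower bound on the error of any linear classifier sign(⟨θ,x⟩+b) with b > 0 on raw inputs. Hence for large enough d the self-supervised classifier provably outperforms every raw linear classifier (with positive intercept) with high probability. -/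
open MeasureTheory ProbabilityTheory Real

/-- The standard normal cumulative distribution function. -/
noncomputable def stdNormalCDF (x : ℝ) : ℝ := ((gaussianReal 0 1) (Set.Iic x)).toReal

lemma gaussian_neg_aux (v : NNReal) :
    (gaussianReal 0 v).map (fun x : ℝ => -x) = gaussianReal 0 v := by
  have h := gaussianReal_map_const_mul (μ := 0) (v := v) (-1)
  simp only [neg_one_mul, mul_zero] at h
  convert h using 2
  ext
  simp

lemma pi_gauss_half_aux (d : ℕ) (v : NNReal) (θ : Fin d → ℝ) :
    (1 : ENNReal) / 2 ≤ Measure.pi (fun _ : Fin d => gaussianReal 0 v)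
      {x | 0 ≤ ∑ i, θ i * x i} := by
  set ν := Measure.pi (fun _ : Fin d => gaussianReal 0 v) with hν
  have hS : Measurable fun x : Fin d → ℝ => ∑ i, θ i * x i :=
    Finset.measurable_sum _ fun i _ => (measurable_pi_apply i).const_mul _
  have hmp : MeasurePreserving (fun a : Fin d → ℝ => fun i => -(a i)) ν ν :=
    measurePreserving_pi _ _ (fun _ => ⟨measurable_neg, gaussian_neg_aux v⟩)
  have hsym : ν {x | ∑ i, θ i * x i ≤ 0} = ν {x | 0 ≤ ∑ i, θ i * x i} := by
    have := hmp.measure_preimage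
      (s := {x | 0 ≤ ∑ i, θ i * x i}) (hS measurableSet_Ici).nullMeasurableSet
    rw [← this]
    congr 1
    ext x
    simp only [Set.mem_preimage, Set.mem_setOf_eq, mul_neg, Finset.sum_neg_distrib]
    constructor <;> intro h <;> linarith
  have hcover : (1 : ENNReal) ≤ ν {x | 0 ≤ ∑ i, θ i * x i} + ν {x | ∑ i, θ i * x i ≤ 0} := by
    have hmono : ν Set.univ ≤ ν ({x | 0 ≤ ∑ i, θ i * x i} ∪ {x | ∑ i, θ i * x i ≤ 0}) := by
      apply measure_mono
      intro x _
      rcases le_or_gt 0 (∑ i, θ i * x i) with h | h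
      · exact Or.inl h
      · exact Or.inr h.le
    calc (1 : ENNReal) = ν Set.univ := by
          haveI : IsProbabilityMeasure ν := by infer_instance
          simp
      _ ≤ _ := hmono.trans (measure_union_le _ _)
  rw [hsym] at hcover
  have h2 : (1 : ENNReal) ≤ 2 * ν {x | 0 ≤ ∑ i, θ i * x i} := by rwa [two_mul]
  calc (1 : ENNReal) / 2 = 2⁻¹ * 1 := by rw [one_div, mul_one]
    _ ≤ 2⁻¹ * (2 * ν {x | 0 ≤ ∑ i, θ i * x i}) := mul_le_mul_right h2 _
    _ = ν {x | 0 ≤ ∑ i, θ i * x i} := by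
        rw [← mul_assoc, ENNReal.inv_mul_cancel (by norm_num) (by norm_num), one_mul]

theorem self_supervised_beats_raw_linear_for_large_d
    (β pPos δ : ℝ) (hβ : 3 < β) (hpPos : 0 ≤ pPos) (hpNeg : 1 / 2 ≤ 1 - pPos)
    (hδ : 0 < δ) (hδ' : δ < (β - 1) / (β + 1)) :
    ∃ d₀ : ℕ, ∀ d : ℕ, d₀ ≤ d →
      (pPos * Real.exp (-(d : ℝ) * (β - 1 - (1 + β) * δ) ^ 2 / 32)
          + (1 - pPos) * Real.exp (-(d : ℝ) * (β - 1 - (1 + β) * δ) ^ 2 / (32 * β ^ 2))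
        < 1 / 4)
      ∧ ∀ (Ω : Type) (_ : MeasureSpace Ω) (_ : IsProbabilityMeasure (ℙ : Measure Ω))
          (σ₁ : ℝ) (_ : 0 < σ₁)
          (X : Ω → Fin d → ℝ) (Y : Ω → ℝ), Measurable X → Measurable Y →
          (∀ ω, Y ω = 1 ∨ Y ω = -1) →
          ℙ {ω | Y ω = 1} = ENNReal.ofReal pPos →
          Measure.map X (ProbabilityTheory.cond ℙ {ω | Y ω = 1})
            = Measure.pi (fun _ : Fin d => gaussianReal 0 (⟨σ₁ ^ 2, sq_nonneg σ₁⟩ : NNReal)) →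
          Measure.map X (ProbabilityTheory.cond ℙ {ω | Y ω = -1})
            = Measure.pi (fun _ : Fin d => gaussianReal 0 ((β * σ₁ ^ 2).toNNReal)) →
          ∀ (θ : Fin d → ℝ) (b : ℝ), θ ≠ 0 → 0 < b →
            (1 : ℝ) / 4
              ≤ (ℙ {ω | (if 0 < (∑ i, θ i * X ω i) + b then (1 : ℝ) else -1) ≠ Y ω}).toReal := by
  have hβ0 : (0 : ℝ) < β := by linarith
  set c : ℝ := (β - 1 - (1 + β) * δ) ^ 2 with hc_def
  have hnum : 0 < β - 1 - (1 + β) * δ := by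
    have h1 : δ * (β + 1) < β - 1 := (lt_div_iff₀ (by linarith)).mp hδ'
    nlinarith
  have hc : 0 < c := pow_pos hnum 2
  have hβ2 : (1 : ℝ) ≤ β ^ 2 := by nlinarith
  set K : ℝ := 32 * β ^ 2 * Real.log 4 / c with hK_def
  refine ⟨⌈K⌉₊ + 1, fun d hd => ⟨?_, ?_⟩⟩
  · -- exponential bound < 1/4
    have hdK : K < (d : ℝ) := by
      have h1 : K ≤ (⌈K⌉₊ : ℝ) := Nat.le_ceil K
      have h2 : (⌈K⌉₊ : ℝ) + 1 ≤ (d : ℝ) := by exact_mod_cast hd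
      linarith
    have h32 : (0 : ℝ) < 32 * β ^ 2 := by nlinarith
    have hlog : Real.log 4 < (d : ℝ) * c / (32 * β ^ 2) := by
      rw [lt_div_iff₀ h32]
      have hKc : K * c = 32 * β ^ 2 * Real.log 4 := by
        rw [hK_def, div_mul_cancel₀ _ hc.ne']
      nlinarith [mul_lt_mul_of_pos_right hdK hc]
    have he2 : Real.exp (-(d : ℝ) * c / (32 * β ^ 2)) < 1 / 4 := by
      have hlt : -(d : ℝ) * c / (32 * β ^ 2) < -Real.log 4 := by
        rw [neg_mul, neg_div]
        linarith
      calc Real.exp (-(d : ℝ) * c / (32 * β ^ 2)) < Real.exp (-Real.log 4) :=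
            Real.exp_lt_exp.mpr hlt
        _ = 1 / 4 := by
            rw [Real.exp_neg, Real.exp_log (by norm_num : (0:ℝ) < 4)]
            norm_num
    have he12 : Real.exp (-(d : ℝ) * c / 32) ≤ Real.exp (-(d : ℝ) * c / (32 * β ^ 2)) := by
      apply Real.exp_le_exp.mpr
      rw [neg_mul, neg_div, neg_div, neg_le_neg_iff]
      apply div_le_div_of_nonneg_left (by positivity) (by norm_num)
      nlinarith
    have hp1 : pPos ≤ 1 := by linarith
    nlinarith [Real.exp_pos (-(d : ℝ) * c / 32), Real.exp_pos (-(d : ℝ) * c / (32 * β ^ 2)),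
      mul_le_mul_of_nonneg_left he12 hpPos]
  · -- lower bound for raw linear classifiers
    intro Ω _ hprob σ₁ hσ₁ X Y hX hY hYval hY1 _ hmapNeg θ b _ hb
    set S : (Fin d → ℝ) → ℝ := fun x => ∑ i, θ i * x i with hS_def
    have hS : Measurable S :=
      Finset.measurable_sum _ fun i _ => (measurable_pi_apply i).const_mul _
    set s : Set Ω := {ω | Y ω = -1} with hs_def
    have hsm : MeasurableSet s := hY (measurableSet_singleton (-1))
    have hscompl : s = {ω | Y ω = 1}ᶜ := by
      ext ω
      simp only [hs_def, Set.mem_setOf_eq, Set.mem_compl_iff]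
      constructor
      · intro h h1; rw [h1] at h; norm_num at h
      · intro h; rcases hYval ω with h1 | h1
        · exact absurd h1 h
        · exact h1
    have hps : ℙ s = 1 - ENNReal.ofReal pPos := by
      rw [hscompl, measure_compl (show MeasurableSet {ω | Y ω = 1} from
        hY (measurableSet_singleton 1)) (measure_ne_top _ _), hY1, measure_univ]
    have hhalf : (1 : ENNReal) / 2 ≤ ℙ s := by
      rw [hps]
      have hle : ENNReal.ofReal pPos ≤ 1 / 2 := by
        have h2 : ENNReal.ofReal pPos ≤ ENNReal.ofReal (1 / 2) :=
          ENNReal.ofReal_le_ofReal (by linarith)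
        refine h2.trans_eq ?_
        rw [ENNReal.ofReal_div_of_pos (by norm_num)]
        norm_num
      calc (1 : ENNReal) / 2 = 1 - 1 / 2 := by
            rw [one_div, ENNReal.one_sub_inv_two]
        _ ≤ 1 - ENNReal.ofReal pPos := tsub_le_tsub_left hle 1
    have hs0 : ℙ s ≠ 0 := by
      intro h
      rw [h] at hhalf
      simp at hhalf
    set A : Set (Fin d → ℝ) := {x | 0 < S x + b} with hA_def
    have hAm : MeasurableSet A := by
      have hm : Measurable fun x => S x + b := hS.add_const b
      exact measurableSet_lt measurable_const hm
    have hcondA : (1 : ENNReal) / 2 ≤ (ℙ[|s]) (X ⁻¹' A) := by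
      have hmap : (ℙ[|s]) (X ⁻¹' A) = (Measure.map X (ℙ[|s])) A :=
        (Measure.map_apply hX hAm).symm
      rw [hmap, hmapNeg]
      refine le_trans (pi_gauss_half_aux d _ θ) (measure_mono ?_)
      intro x hx
      simp only [Set.mem_setOf_eq] at hx
      simp only [hA_def, Set.mem_setOf_eq, hS_def]
      linarith
    have hprod : (1 : ENNReal) / 4 ≤ ℙ (s ∩ X ⁻¹' A) := by
      have hca := cond_apply hsm (ℙ : Measure Ω) (X ⁻¹' A)
      have heq : ℙ s * (ℙ[|s]) (X ⁻¹' A) = ℙ (s ∩ X ⁻¹' A) := by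
        rw [hca, ← mul_assoc, ENNReal.mul_inv_cancel hs0 (measure_ne_top _ _), one_mul]
      calc (1 : ENNReal) / 4 = (1 / 2) * (1 / 2) := by
            rw [one_div, one_div, ← ENNReal.mul_inv (by norm_num) (by norm_num)]
            norm_num
        _ ≤ ℙ s * (ℙ[|s]) (X ⁻¹' A) := mul_le_mul' hhalf hcondA
        _ = ℙ (s ∩ X ⁻¹' A) := heq
    have hsub : s ∩ X ⁻¹' A ⊆
        {ω | (if 0 < (∑ i, θ i * X ω i) + b then (1 : ℝ) else -1) ≠ Y ω} := by
      intro ω hω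
      obtain ⟨hω1, hω2⟩ := hω
      simp only [Set.mem_preimage, hA_def, Set.mem_setOf_eq, hS_def] at hω2
      simp only [Set.mem_setOf_eq, if_pos hω2]
      rw [hω1]
      norm_num
    have hfinal : (1 : ENNReal) / 4 ≤
        ℙ {ω | (if 0 < (∑ i, θ i * X ω i) + b then (1 : ℝ) else -1) ≠ Y ω} :=
      hprod.trans (measure_mono hsub)
    have hmono := ENNReal.toReal_mono (measure_ne_top _ _) hfinal
    simpa using hmono
end
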